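/- arXiv:2006.04195 — 3 statements merged into one kernel-verified Lean document; each statement's English description precedes it below -/
import Mathlib

section
/- For every integer n ≥ 2, the quadratic polynomial 3(n-1)(2n²-n+1)t² - 2(2n²-n-1)((3n²-n+2)/n)t + (n+1)(2n²-n-1) in the real variable t has two distinct real roots. -/
/-- For every integer `n ≥ 2`, the quadratic polynomial
`3(n-1)(2n²-n+1)t² - 2(2n²-n-1)((3n²-n+2)/n)t + (n+1)(2n²-n-1)` has two distinct real roots. -/
theorem stmt0 (n : ℤ) (hn : 2 ≤ n) :
    ∃ t₁ t₂ : ℝ, t₁ ≠ t₂ ∧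
      3 * ((n : ℝ) - 1) * (2 * (n : ℝ) ^ 2 - n + 1) * t₁ ^ 2
        - 2 * (2 * (n : ℝ) ^ 2 - n - 1) * ((3 * (n : ℝ) ^ 2 - n + 2) / n) * t₁
        + ((n : ℝ) + 1) * (2 * (n : ℝ) ^ 2 - n - 1) = 0 ∧
      3 * ((n : ℝ) - 1) * (2 * (n : ℝ) ^ 2 - n + 1) * t₂ ^ 2
        - 2 * (2 * (n : ℝ) ^ 2 - n - 1) * ((3 * (n : ℝ) ^ 2 - n + 2) / n) * t₂
        + ((n : ℝ) + 1) * (2 * (n : ℝ) ^ 2 - n - 1) = 0 := by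
  have hx : (2 : ℝ) ≤ (n : ℝ) := by exact_mod_cast hn
  set x : ℝ := (n : ℝ)
  have hx0 : x ≠ 0 := by positivity
  set a : ℝ := 3 * (x - 1) * (2 * x ^ 2 - x + 1) with ha
  set b : ℝ := -(2 * (2 * x ^ 2 - x - 1) * ((3 * x ^ 2 - x + 2) / x)) with hb
  set c : ℝ := (x + 1) * (2 * x ^ 2 - x - 1) with hc
  have ha0 : 0 < a := by nlinarith
  set D : ℝ := b ^ 2 - 4 * a * c with hD
  have hkey : D * x ^ 2 =
      96*x^8 - 192*x^7 + 232*x^6 - 176*x^5 - 16*x^4 + 64*x^3 - 40*x^2 + 16*x + 16 := by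
    rw [hD, hb, ha, hc]
    field_simp
    ring
  have hx2 : 0 < x ^ 2 := by positivity
  have hDx2 : 0 < D * x ^ 2 := by
    rw [hkey]
    nlinarith [sq_nonneg (x - 2), sq_nonneg (x^2 - 2*x), sq_nonneg (x^3 - x^2),
      sq_nonneg (x^4 - x^3), sq_nonneg x]
  have hDpos : 0 < D := by
    by_contra h
    push_neg at h
    nlinarith
  have hs : Real.sqrt D ^ 2 = D := Real.sq_sqrt hDpos.le
  have hs0 : 0 < Real.sqrt D := Real.sqrt_pos.mpr hDpos
  refine ⟨(-b + Real.sqrt D) / (2 * a), (-b - Real.sqrt D) / (2 * a), ?_, ?_, ?_⟩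
  · intro h
    have h2a : (2 * a) ≠ 0 := by positivity
    field_simp at h
    nlinarith
  · have h2a : (2 * a) ≠ 0 := by positivity
    have : a * ((-b + Real.sqrt D) / (2 * a)) ^ 2 + b * ((-b + Real.sqrt D) / (2 * a)) + c = 0 := by
      field_simp
      nlinarith [hs]
    calc 3 * (x - 1) * (2 * x ^ 2 - x + 1) * ((-b + Real.sqrt D) / (2 * a)) ^ 2
        - 2 * (2 * x ^ 2 - x - 1) * ((3 * x ^ 2 - x + 2) / x) * ((-b + Real.sqrt D) / (2 * a))
        + (x + 1) * (2 * x ^ 2 - x - 1)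
        = a * ((-b + Real.sqrt D) / (2 * a)) ^ 2 + b * ((-b + Real.sqrt D) / (2 * a)) + c := by
          rw [ha, hb, hc]; ring
      _ = 0 := this
  · have h2a : (2 * a) ≠ 0 := by positivity
    have : a * ((-b - Real.sqrt D) / (2 * a)) ^ 2 + b * ((-b - Real.sqrt D) / (2 * a)) + c = 0 := by
      field_simp
      nlinarith [hs]
    calc 3 * (x - 1) * (2 * x ^ 2 - x + 1) * ((-b - Real.sqrt D) / (2 * a)) ^ 2
        - 2 * (2 * x ^ 2 - x - 1) * ((3 * x ^ 2 - x + 2) / x) * ((-b - Real.sqrt D) / (2 * a))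
        + (x + 1) * (2 * x ^ 2 - x - 1)
        = a * ((-b - Real.sqrt D) / (2 * a)) ^ 2 + b * ((-b - Real.sqrt D) / (2 * a)) + c := by
          rw [ha, hb, hc]; ring
      _ = 0 := this
end

section
/- Let 𝔤 be a compact semisimple Lie algebra with B the negative of its Killing form, and let 𝔤 = 𝔪₀ + 𝔪₁ + 𝔪₂ be a B-orthogonal decomposition such that [𝔪₀, 𝔪₁] = 0 and 𝔪₀ + 𝔪₁ is a subalgebra. Define [i,j,k] = Σ (B([e_α,e_β],e_γ))² summed over B-orthonormal basis vectors e_α ∈ 𝔪ᵢ, e_β ∈ 𝔪ⱼ, e_γ ∈ 𝔪_k. Then [1,2,2] = dim 𝔪₁ - [1,1,1]. -/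
/-!
With `B = -κ` and a `B`-orthonormal basis `(e_a)` of `𝔤`, computing `κ(x, x) = tr (ad x)²` in
that basis and using the invariance of `κ` gives `B(x, x) = Σ_{a,c} B([x, e_a], e_c)²`. Take the
basis adapted to `𝔪₀ ⊕ 𝔪₁ ⊕ 𝔪₂` and `x = e_α ∈ 𝔪₁`, so that the left side is `1`. Since
`[𝔪₀, 𝔪₁] = 0`, every term with `e_a` or `e_c` in `𝔪₀` vanishes, and since `𝔪₀ + 𝔪₁` is a
subalgebra orthogonal to `𝔪₂`, so do the terms of types `[1,1,2]` and `[1,2,1]`. Summing over `α`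
leaves `dim 𝔪₁ = [1,1,1] + [1,2,2]`.
-/

open LieAlgebra

namespace LinearMap.BilinForm

variable {R M ι κ : Type*} [CommRing R] [AddCommGroup M] [Module R M]
  [DecidableEq ι] [DecidableEq κ] {B : LinearMap.BilinForm R M}

def IsOrthonormal (B : LinearMap.BilinForm R M) (v : ι → M) : Prop :=
  ∀ i j, B (v i) (v j) = if i = j then 1 else 0

namespace IsOrthonormal

theorem linearIndependent {v : ι → M} (hv : B.IsOrthonormal v) : LinearIndependent R v := by
  rw [linearIndependent_iff']
  intro s c hs i hi
  simpa [sum_left, hv _ _, hi] using congrArg (B · (v i)) hs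

theorem sumElim (hB : B.IsRefl) {v : ι → M} {w : κ → M} (hv : B.IsOrthonormal v)
    (hw : B.IsOrthonormal w) (hvw : ∀ i j, B (v i) (w j) = 0) :
    B.IsOrthonormal (Sum.elim v w) := by
  rintro (i | i) (j | j)
  · simpa using hv i j
  · simpa using hvw i j
  · simpa using hB _ _ (hvw j i)
  · simpa using hw i j

variable [Fintype ι] (b : Module.Basis ι R M)

theorem repr_apply (hb : B.IsOrthonormal b) (x : M) (i : ι) : b.repr x i = B x (b i) := by
  conv_rhs => rw [← b.sum_repr x]
  simp [-Module.Basis.sum_repr, hb _ _]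

theorem apply_self_eq_sum_sq (hb : B.IsOrthonormal b) (x : M) :
    B x x = ∑ i, B x (b i) ^ 2 := by
  nth_rw 2 [← b.sum_repr x]
  simp [-Module.Basis.sum_repr, hb.repr_apply, sq]

end IsOrthonormal

end LinearMap.BilinForm

open LinearMap.BilinForm

theorem killingForm_neg_apply_self_eq_sum_sq {R L ι : Type*} [CommRing R] [LieRing L]
    [LieAlgebra R L] [Fintype ι] [DecidableEq ι] {v : ι → L}
    (hv : (-killingForm R L).IsOrthonormal v) (hspan : ⊤ ≤ Submodule.span R (Set.range v))
    (x : L) : (-killingForm R L) x x = ∑ i, ∑ j, (-killingForm R L) ⁅x, v i⁆ (v j) ^ 2 := by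
  let b := Module.Basis.mk hv.linearIndependent hspan
  have hb : (-killingForm R L).IsOrthonormal b := by rwa [Module.Basis.coe_mk]
  have := Module.Free.of_basis b
  have := Module.Finite.of_basis b
  have htrace : (-killingForm R L) x x = ∑ i, (-killingForm R L) ⁅x, v i⁆ ⁅x, v i⁆ := by
    rw [LinearMap.neg_apply, LinearMap.neg_apply, killingForm_apply_apply,
      LinearMap.trace_eq_matrix_trace R b, Matrix.trace, ← Finset.sum_neg_distrib]
    refine Finset.sum_congr rfl fun i _ => ?_
    rw [Matrix.diag_apply, LinearMap.toMatrix_apply, hb.repr_apply]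
    simp [b, LieModule.traceForm_apply_lie_apply']
  rw [htrace]
  refine Finset.sum_congr rfl fun i _ => ?_
  simpa [b] using hb.apply_self_eq_sum_sq b ⁅x, v i⁆

theorem killingForm_lie_apply_cycle {R L : Type*} [CommRing R] [LieRing L] [LieAlgebra R L]
    (x y z : L) : killingForm R L ⁅x, y⁆ z = killingForm R L ⁅z, x⁆ y := by
  rw [LieModule.traceForm_comm, LieModule.traceForm_apply_lie_apply]

theorem stmt7_general {g : Type*} [LieRing g] [LieAlgebra ℝ g]
    (m0 m1 m2 : Submodule ℝ g)
    (htop : m0 ⊔ m1 ⊔ m2 = ⊤)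
    (horth01 : ∀ x ∈ m0, ∀ y ∈ m1, killingForm ℝ g x y = 0)
    (horth02 : ∀ x ∈ m0, ∀ y ∈ m2, killingForm ℝ g x y = 0)
    (horth12 : ∀ x ∈ m1, ∀ y ∈ m2, killingForm ℝ g x y = 0)
    (hcomm : ∀ x ∈ m0, ∀ y ∈ m1, ⁅x, y⁆ = (0 : g))
    (hsub : ∀ x ∈ m0 ⊔ m1, ∀ y ∈ m0 ⊔ m1, ⁅x, y⁆ ∈ m0 ⊔ m1)
    (d0 d1 d2 : ℕ)
    (e0 : Fin d0 → g) (he0 : ∀ i, e0 i ∈ m0)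
    (horthb0 : ∀ i j, -(killingForm ℝ g (e0 i) (e0 j)) = if i = j then (1 : ℝ) else 0)
    (hspan0 : Submodule.span ℝ (Set.range e0) = m0)
    (e1 : Fin d1 → g) (he1 : ∀ i, e1 i ∈ m1)
    (horthb1 : ∀ i j, -(killingForm ℝ g (e1 i) (e1 j)) = if i = j then (1 : ℝ) else 0)
    (hspan1 : Submodule.span ℝ (Set.range e1) = m1)
    (e2 : Fin d2 → g) (he2 : ∀ i, e2 i ∈ m2)
    (horthb2 : ∀ i j, -(killingForm ℝ g (e2 i) (e2 j)) = if i = j then (1 : ℝ) else 0)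
    (hspan2 : Submodule.span ℝ (Set.range e2) = m2) :
    (∑ i, ∑ j, ∑ l, (-(killingForm ℝ g ⁅e1 i, e2 j⁆ (e2 l))) ^ 2)
      = (d1 : ℝ) - ∑ i, ∑ j, ∑ l, (-(killingForm ℝ g ⁅e1 i, e1 j⁆ (e1 l))) ^ 2 := by
  have hrefl : (-killingForm ℝ g).IsRefl :=
    (isSymm_iff.2 (LieModule.traceForm_isSymm ℝ g g)).neg.isRefl
  have horth : (-killingForm ℝ g).IsOrthonormal (Sum.elim e0 (Sum.elim e1 e2)) := by
    refine IsOrthonormal.sumElim hrefl horthb0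
      (IsOrthonormal.sumElim hrefl horthb1 horthb2 fun i j => ?_) ?_
    · simp [horth12 _ (he1 i) _ (he2 j)]
    · rintro i (j | j)
      · simp [horth01 _ (he0 i) _ (he1 j)]
      · simp [horth02 _ (he0 i) _ (he2 j)]
  have hspan : ⊤ ≤ Submodule.span ℝ (Set.range (Sum.elim e0 (Sum.elim e1 e2))) := by
    rw [Set.Sum.elim_range, Set.Sum.elim_range, Submodule.span_union, Submodule.span_union,
      hspan0, hspan1, hspan2, ← sup_assoc, htop]
  have hlie10 : ∀ i j, ⁅e1 i, e0 j⁆ = 0 := fun i j => by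
    rw [← lie_skew, hcomm _ (he0 j) _ (he1 i), neg_zero]
  have hκ0 : ∀ i y k, killingForm ℝ g ⁅e1 i, y⁆ (e0 k) = 0 := fun i y k => by
    rw [killingForm_lie_apply_cycle, hcomm _ (he0 k) _ (he1 i), map_zero, LinearMap.zero_apply]
  have hκ112 : ∀ i j l, killingForm ℝ g ⁅e1 i, e1 j⁆ (e2 l) = 0 := fun i j l =>
    (sup_le (fun x hx => horth02 x hx _ (he2 l)) fun x hx => horth12 x hx _ (he2 l) :
      m0 ⊔ m1 ≤ LinearMap.ker ((killingForm ℝ g).flip (e2 l)))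
      (hsub _ (Submodule.mem_sup_right (he1 i)) _ (Submodule.mem_sup_right (he1 j)))
  have hκ121 : ∀ i j l, killingForm ℝ g ⁅e1 i, e2 j⁆ (e1 l) = 0 := fun i j l => by
    rw [killingForm_lie_apply_cycle, hκ112]
  have hunit : ∀ i, (1 : ℝ) = ∑ j, ∑ l, (-(killingForm ℝ g ⁅e1 i, e1 j⁆ (e1 l))) ^ 2
      + ∑ j, ∑ l, (-(killingForm ℝ g ⁅e1 i, e2 j⁆ (e2 l))) ^ 2 := fun i => by
    simpa [horthb1 i i, Fintype.sum_sum_type, hlie10, hκ0, hκ112, hκ121, Finset.sum_add_distrib]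
      using killingForm_neg_apply_self_eq_sum_sq horth hspan (e1 i)
  rw [eq_sub_iff_add_eq, add_comm, ← Finset.sum_add_distrib,
    ← Finset.sum_congr rfl fun i _ => hunit i]
  simp

/-- Let `𝔤` be a compact semisimple Lie algebra, `B = -κ`, and `𝔤 = 𝔪₀ + 𝔪₁ + 𝔪₂` a
`B`-orthogonal decomposition with `[𝔪₀,𝔪₁] = 0` and `𝔪₀ + 𝔪₁` a subalgebra. With
`[i,j,k] = Σ (B([e_α,e_β],e_γ))²` over `B`-orthonormal bases `e_α ∈ 𝔪ᵢ`, `e_β ∈ 𝔪ⱼ`,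
`e_γ ∈ 𝔪_k`, we have `[1,2,2] = dim 𝔪₁ - [1,1,1]`. -/
theorem stmt7 {g : Type*} [LieRing g] [LieAlgebra ℝ g] [Module.Finite ℝ g]
    (hneg : ∀ x : g, x ≠ 0 → killingForm ℝ g x x < 0)
    (m0 m1 m2 : Submodule ℝ g)
    (htop : m0 ⊔ m1 ⊔ m2 = ⊤)
    (horth01 : ∀ x ∈ m0, ∀ y ∈ m1, killingForm ℝ g x y = 0)
    (horth02 : ∀ x ∈ m0, ∀ y ∈ m2, killingForm ℝ g x y = 0)
    (horth12 : ∀ x ∈ m1, ∀ y ∈ m2, killingForm ℝ g x y = 0)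
    (hcomm : ∀ x ∈ m0, ∀ y ∈ m1, ⁅x, y⁆ = (0 : g))
    (hsub : ∀ x ∈ m0 ⊔ m1, ∀ y ∈ m0 ⊔ m1, ⁅x, y⁆ ∈ m0 ⊔ m1)
    (d0 d1 d2 : ℕ)
    (e0 : Fin d0 → g) (he0 : ∀ i, e0 i ∈ m0)
    (horthb0 : ∀ i j, -(killingForm ℝ g (e0 i) (e0 j)) = if i = j then (1 : ℝ) else 0)
    (hspan0 : Submodule.span ℝ (Set.range e0) = m0)
    (e1 : Fin d1 → g) (he1 : ∀ i, e1 i ∈ m1)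
    (horthb1 : ∀ i j, -(killingForm ℝ g (e1 i) (e1 j)) = if i = j then (1 : ℝ) else 0)
    (hspan1 : Submodule.span ℝ (Set.range e1) = m1)
    (e2 : Fin d2 → g) (he2 : ∀ i, e2 i ∈ m2)
    (horthb2 : ∀ i j, -(killingForm ℝ g (e2 i) (e2 j)) = if i = j then (1 : ℝ) else 0)
    (hspan2 : Submodule.span ℝ (Set.range e2) = m2) :
    (∑ i, ∑ j, ∑ l, (-(killingForm ℝ g ⁅e1 i, e2 j⁆ (e2 l))) ^ 2)
      = (d1 : ℝ) - ∑ i, ∑ j, ∑ l, (-(killingForm ℝ g ⁅e1 i, e1 j⁆ (e1 l))) ^ 2 :=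
  stmt7_general m0 m1 m2 htop horth01 horth02 horth12 hcomm hsub d0 d1 d2 e0 he0 horthb0 hspan0 e1
    he1 horthb1 hspan1 e2 he2 horthb2 hspan2
end

section
/- Let 𝔤 be a compact semisimple Lie algebra, B = -Killing form, 𝔥 ⊆ 𝔨 ⊆ 𝔤 subalgebras with B-orthogonal decompositions 𝔤 = 𝔥 + 𝔪₁ + 𝔪₂ and 𝔨 = 𝔥 + 𝔪₁. For x₁, x₂ > 0 let S(x₁,x₂) = d₁/(2x₁) + d₂/(2x₂) - [1,1,1]/(4x₁) - [2,2,2]/(4x₂) - ([1,2,2]/4)(x₁/x₂² + 2/x₁), where dᵢ = dim 𝔪ᵢ. Then the critical points of S subject to the constraint x₁^{d₁} x₂^{d₂} = c (c > 0 a constant) satisfy, with t = x₁/x₂, the equation [1,2,2](2d₁+d₂)t² + (d₁[2,2,2] - 2d₁d₂)t + 2d₁d₂ - 2d₂[1,2,2] - d₂[1,1,1] = 0. -/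
/-!
Multiplying the two Lagrange equations `∂ᵢS = λ ∂ᵢg` by `xᵢ` and using Euler's identity
`xᵢ ∂ᵢg = dᵢ g` for the monomial `g = x₁^{d₁} x₂^{d₂}` makes both right-hand sides multiples of
`λ g`; eliminating it leaves `d₂ x₁ ∂₁S = d₁ x₂ ∂₂S`, which after clearing denominators is the
quadratic equation in `t = x₁/x₂`.
-/

section Euler

variable {𝕜 : Type*} [NontriviallyNormedField 𝕜]

theorem mul_deriv_pow_mul_const (d : ℕ) (b x : 𝕜) :
    x * deriv (fun x => x ^ d * b) x = d * (x ^ d * b) := by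
  rw [deriv_mul_const_field, deriv_pow_field]
  rcases d with _ | d
  · simp
  · rw [Nat.add_sub_cancel, pow_succ]
    ring

theorem mul_deriv_const_mul_pow (d : ℕ) (b x : 𝕜) :
    x * deriv (fun x => b * x ^ d) x = d * (b * x ^ d) := by
  simpa only [mul_comm b] using mul_deriv_pow_mul_const d b x

end Euler

namespace TwoSummand

variable (d1 d2 a111 a122 a222 : ℝ)

/-- The paper's `S(x₁, x₂)`, with `aᵢⱼₖ` standing for `[i,j,k]`. -/
noncomputable def scalarCurvature (x1 x2 : ℝ) : ℝ :=
  d1 / (2 * x1) + d2 / (2 * x2) - a111 / (4 * x1) - a222 / (4 * x2)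
    - (a122 / 4) * (x1 / x2 ^ 2 + 2 / x1)

theorem hasDerivAt_scalarCurvature_fst {x1 : ℝ} (x2 : ℝ) (hx1 : x1 ≠ 0) :
    HasDerivAt (fun x => scalarCurvature d1 d2 a111 a122 a222 x x2)
      ((a111 + 2 * a122 - 2 * d1) / (4 * x1 ^ 2) - a122 / (4 * x2 ^ 2)) x1 := by
  have h := (((((hasDerivAt_const x1 d1).div ((hasDerivAt_id x1).const_mul 2)
      (by positivity)).add (hasDerivAt_const x1 (d2 / (2 * x2)))).sub
      ((hasDerivAt_const x1 a111).div ((hasDerivAt_id x1).const_mul 4) (by positivity))).sub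
      (hasDerivAt_const x1 (a222 / (4 * x2)))).sub
      ((((hasDerivAt_id x1).div_const (x2 ^ 2)).add
        ((hasDerivAt_const x1 (2 : ℝ)).div (hasDerivAt_id x1) hx1)).const_mul (a122 / 4))
  refine h.congr_deriv ?_
  simp only [id]
  field_simp
  ring

theorem hasDerivAt_scalarCurvature_snd (x1 : ℝ) {x2 : ℝ} (hx2 : x2 ≠ 0) :
    HasDerivAt (fun y => scalarCurvature d1 d2 a111 a122 a222 x1 y)
      ((a222 - 2 * d2) / (4 * x2 ^ 2) + a122 * x1 / (2 * x2 ^ 3)) x2 := by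
  have h := ((((hasDerivAt_const x2 (d1 / (2 * x1))).add
      ((hasDerivAt_const x2 d2).div ((hasDerivAt_id x2).const_mul 2) (by positivity))).sub
      (hasDerivAt_const x2 (a111 / (4 * x1)))).sub
      ((hasDerivAt_const x2 a222).div ((hasDerivAt_id x2).const_mul 4) (by positivity))).sub
      ((((hasDerivAt_const x2 x1).div (hasDerivAt_pow 2 x2) (by positivity)).add
        (hasDerivAt_const x2 (2 / x1))).const_mul (a122 / 4))
  refine h.congr_deriv ?_
  simp only [id]
  field_simp
  ring

end TwoSummand

open TwoSummand in
theorem stmt8_general (d1 d2 : ℕ)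
    (a111 a122 a222 : ℝ)
    (x1 x2 : ℝ) (hx1 : 0 < x1) (hx2 : 0 < x2)
    (lam : ℝ)
    (hcrit1 : deriv (fun x : ℝ => (d1 : ℝ) / (2 * x) + (d2 : ℝ) / (2 * x2)
        - a111 / (4 * x) - a222 / (4 * x2) - (a122 / 4) * (x / x2 ^ 2 + 2 / x)) x1
      = lam * deriv (fun x : ℝ => x ^ d1 * x2 ^ d2) x1)
    (hcrit2 : deriv (fun y : ℝ => (d1 : ℝ) / (2 * x1) + (d2 : ℝ) / (2 * y)
        - a111 / (4 * x1) - a222 / (4 * y) - (a122 / 4) * (x1 / y ^ 2 + 2 / x1)) x2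
      = lam * deriv (fun y : ℝ => x1 ^ d1 * y ^ d2) x2) :
    a122 * (2 * (d1 : ℝ) + d2) * (x1 / x2) ^ 2
      + ((d1 : ℝ) * a222 - 2 * d1 * d2) * (x1 / x2)
      + 2 * (d1 : ℝ) * d2 - 2 * (d2 : ℝ) * a122 - (d2 : ℝ) * a111 = 0 := by
  have euler1 : x1 * ((a111 + 2 * a122 - 2 * d1) / (4 * x1 ^ 2) - a122 / (4 * x2 ^ 2))
      = lam * (d1 * (x1 ^ d1 * x2 ^ d2)) := by
    rw [← mul_deriv_pow_mul_const, mul_left_comm, ← hcrit1]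
    exact congrArg _ (hasDerivAt_scalarCurvature_fst _ _ _ _ _ x2 hx1.ne').deriv.symm
  have euler2 : x2 * ((a222 - 2 * d2) / (4 * x2 ^ 2) + a122 * x1 / (2 * x2 ^ 3))
      = lam * (d2 * (x1 ^ d1 * x2 ^ d2)) := by
    rw [← mul_deriv_const_mul_pow, mul_left_comm, ← hcrit2]
    exact congrArg _ (hasDerivAt_scalarCurvature_snd _ _ _ _ _ x1 hx2.ne').deriv.symm
  have no_multiplier : d2 * (x1 * ((a111 + 2 * a122 - 2 * d1) / (4 * x1 ^ 2) - a122 / (4 * x2 ^ 2)))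
      = d1 * (x2 * ((a222 - 2 * d2) / (4 * x2 ^ 2) + a122 * x1 / (2 * x2 ^ 3))) := by
    rw [euler1, euler2]
    ring
  have hx1₀ := hx1.ne'
  have hx2₀ := hx2.ne'
  field_simp at no_multiplier ⊢
  linear_combination (-1 / 2 : ℝ) * no_multiplier

/-- Lagrange-multiplier reduction (Lemma 1 of the paper): with `dᵢ = dim 𝔪ᵢ` and structure
constants `[1,1,1], [1,2,2], [2,2,2] ≥ 0`, any critical point `(x₁,x₂)`, `x₁,x₂ > 0`, of the
scalar curvature `S(x₁,x₂) = d₁/(2x₁) + d₂/(2x₂) - [1,1,1]/(4x₁) - [2,2,2]/(4x₂)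
- ([1,2,2]/4)(x₁/x₂² + 2/x₁)` subject to the volume constraint `x₁^{d₁} x₂^{d₂} = c` satisfies,
with `t = x₁/x₂`,
`[1,2,2](2d₁+d₂)t² + (d₁[2,2,2] - 2d₁d₂)t + 2d₁d₂ - 2d₂[1,2,2] - d₂[1,1,1] = 0`. -/
theorem stmt8 (d1 d2 : ℕ) (hd1 : 0 < d1) (hd2 : 0 < d2)
    (a111 a122 a222 : ℝ) (h111 : 0 ≤ a111) (h122 : 0 ≤ a122) (h222 : 0 ≤ a222)
    (c : ℝ) (hc : 0 < c) (x1 x2 : ℝ) (hx1 : 0 < x1) (hx2 : 0 < x2)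
    (hcon : x1 ^ d1 * x2 ^ d2 = c)
    (lam : ℝ)
    (hcrit1 : deriv (fun x : ℝ => (d1 : ℝ) / (2 * x) + (d2 : ℝ) / (2 * x2)
        - a111 / (4 * x) - a222 / (4 * x2) - (a122 / 4) * (x / x2 ^ 2 + 2 / x)) x1
      = lam * deriv (fun x : ℝ => x ^ d1 * x2 ^ d2) x1)
    (hcrit2 : deriv (fun y : ℝ => (d1 : ℝ) / (2 * x1) + (d2 : ℝ) / (2 * y)
        - a111 / (4 * x1) - a222 / (4 * y) - (a122 / 4) * (x1 / y ^ 2 + 2 / x1)) x2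
      = lam * deriv (fun y : ℝ => x1 ^ d1 * y ^ d2) x2) :
    a122 * (2 * (d1 : ℝ) + d2) * (x1 / x2) ^ 2
      + ((d1 : ℝ) * a222 - 2 * d1 * d2) * (x1 / x2)
      + 2 * (d1 : ℝ) * d2 - 2 * (d2 : ℝ) * a122 - (d2 : ℝ) * a111 = 0 :=
  stmt8_general d1 d2 a111 a122 a222 x1 x2 hx1 hx2 lam hcrit1 hcrit2
end
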